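/- arXiv:2412.07859 — 7 statements merged into one kernel-verified Lean document; each statement's English description precedes it below -/
import Mathlib

section
/- Let N ≥ 1 and let a : Fin N → ℝ satisfy a i > 0 for all i. Then the function g(x) = (∑_{i} a_i / √(x_i))² is convex on the open positive orthant {x : Fin N → ℝ | ∀ i, 0 < x i}. -/
/-!
Each term `x ↦ aᵢ / √xᵢ` is convex, being a nonnegative multiple of the convex, antitone map
`y ↦ y⁻¹` composed with the concave map `√` and a coordinate projection. Their sum is then a
nonnegative convex function, and the square of a nonnegative convex function is convex.
-/

open Set

theorem ConvexOn.fun_sum {𝕜 E β ι : Type*} [Semiring 𝕜] [PartialOrder 𝕜] [AddCommMonoid E]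
    [AddCommMonoid β] [PartialOrder β] [IsOrderedAddMonoid β] [SMul 𝕜 E] [Module 𝕜 β]
    {s : Set E} {f : ι → E → β} (hs : Convex 𝕜 s) (t : Finset ι)
    (hf : ∀ i ∈ t, ConvexOn 𝕜 s (f i)) :
    ConvexOn 𝕜 s fun x => ∑ i ∈ t, f i x := by
  classical
  induction t using Finset.induction with
  | empty => simpa using convexOn_const 0 hs
  | insert j t hj ih =>
    simp only [Finset.sum_insert hj]
    exact (hf j (Finset.mem_insert_self j t)).add
      (ih fun i hi => hf i (Finset.mem_insert_of_mem hi))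

theorem ConvexOn.comp_eval {𝕜 ι : Type*} {β : Type*} [Semiring 𝕜] [PartialOrder 𝕜]
    [AddCommMonoid β] [PartialOrder β] [SMul 𝕜 β] {s : Set 𝕜} {f : 𝕜 → β}
    (hf : ConvexOn 𝕜 s f) (i : ι) :
    ConvexOn 𝕜 {x : ι → 𝕜 | x i ∈ s} fun x => f (x i) :=
  hf.comp_linearMap (LinearMap.proj (R := 𝕜) (φ := fun _ : ι => 𝕜) i)

theorem convex_positiveOrthant {ι : Type*} : Convex ℝ {x : ι → ℝ | ∀ i, 0 < x i} := by
  simpa [Set.pi] using convex_pi (ι := ι) (s := univ) fun _ _ => convex_Ioi (0 : ℝ)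

theorem Real.sqrt_image_Ioi_zero : Real.sqrt '' Ioi 0 = Ioi 0 := by
  ext y
  refine ⟨?_, fun hy => ⟨y ^ 2, mem_Ioi.2 (pow_pos hy 2), Real.sqrt_sq (le_of_lt hy)⟩⟩
  rintro ⟨t, ht, rfl⟩
  exact Real.sqrt_pos.2 ht

theorem convexOn_inv_sqrt : ConvexOn ℝ (Ioi 0) fun t => (√t)⁻¹ := by
  have hinv : ConvexOn ℝ (Real.sqrt '' Ioi 0) fun y : ℝ => y⁻¹ := by
    simpa [Real.sqrt_image_Ioi_zero] using
      (strictConvexOn_zpow (m := -1) (by decide) (by decide)).convexOn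
  have hanti : AntitoneOn (fun y : ℝ => y⁻¹) (Real.sqrt '' Ioi 0) := by
    rw [Real.sqrt_image_Ioi_zero]
    exact fun x hx y _ hxy => inv_anti₀ hx hxy
  exact hinv.comp_concaveOn
    (Real.strictConcaveOn_sqrt.concaveOn.subset Ioi_subset_Ici_self (convex_Ioi 0)) hanti

theorem convexOn_div_sqrt {c : ℝ} (hc : 0 ≤ c) : ConvexOn ℝ (Ioi 0) fun t => c / √t := by
  simpa only [div_eq_mul_inv, smul_eq_mul] using convexOn_inv_sqrt.smul hc

theorem stmt_2_general (N : ℕ) (a : Fin N → ℝ) (ha : ∀ i, 0 < a i) :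
    ConvexOn ℝ {x : Fin N → ℝ | ∀ i, 0 < x i}
      (fun x : Fin N → ℝ => (∑ i, a i / Real.sqrt (x i)) ^ 2) := by
  have hterm (i : Fin N) :
      ConvexOn ℝ {x : Fin N → ℝ | ∀ i, 0 < x i} fun x => a i / √(x i) :=
    ((convexOn_div_sqrt (ha i).le).comp_eval i).subset (fun _ hx => hx i)
      convex_positiveOrthant
  have hsum_nonneg : ∀ ⦃x : Fin N → ℝ⦄, x ∈ {x : Fin N → ℝ | ∀ i, 0 < x i} →
      0 ≤ ∑ i, a i / √(x i) :=
    fun _ _ => Finset.sum_nonneg fun i _ => div_nonneg (ha i).le (Real.sqrt_nonneg _)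
  exact (ConvexOn.fun_sum convex_positiveOrthant Finset.univ fun i _ => hterm i).pow hsum_nonneg 2

/-- For `N ≥ 1` and `a : Fin N → ℝ` with `a i > 0` for all `i`, the
function `g(x) = (∑ i, a i / √(x i))²` is convex on the open positive orthant. -/
theorem stmt_2 (N : ℕ) (hN : 1 ≤ N) (a : Fin N → ℝ) (ha : ∀ i, 0 < a i) :
    ConvexOn ℝ {x : Fin N → ℝ | ∀ i, 0 < x i}
      (fun x : Fin N → ℝ => (∑ i, a i / Real.sqrt (x i)) ^ 2) :=
  stmt_2_general N a ha
end

section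
/- Let N ≥ 1, let a : Fin N → ℝ satisfy a i > 0 for all i, and let g(x) = (∑_{i} a_i / √(x_i))². Then for every convex set S contained in the open positive orthant {x : Fin N → ℝ | ∀ i, 0 < x i}, the set of minimizers of g over S has at most one element (the minimizer, if it exists, is unique). -/
open Real Set

private lemma inv_sqrt_strict (x y : ℝ) (hx : 0 < x) (hy : 0 < y) (hxy : x ≠ y) :
    (Real.sqrt ((1/2 : ℝ) * x + (1/2 : ℝ) * y))⁻¹ <
      (1/2 : ℝ) * (Real.sqrt x)⁻¹ + (1/2 : ℝ) * (Real.sqrt y)⁻¹ := by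
  have hp : (0:ℝ) < 1/2 := by norm_num
  have hpq : (1/2 : ℝ) + 1/2 = 1 := by norm_num
  have hsx : 0 < Real.sqrt x := Real.sqrt_pos.2 hx
  have hsy : 0 < Real.sqrt y := Real.sqrt_pos.2 hy
  have h1 : (1/2 : ℝ) * Real.sqrt x + (1/2 : ℝ) * Real.sqrt y <
      Real.sqrt ((1/2 : ℝ) * x + (1/2 : ℝ) * y) :=
    Real.strictConcaveOn_sqrt.2 hx.le hy.le hxy hp hp hpq
  have h2 : (Real.sqrt ((1/2 : ℝ) * x + (1/2 : ℝ) * y))⁻¹ <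
      ((1/2 : ℝ) * Real.sqrt x + (1/2 : ℝ) * Real.sqrt y)⁻¹ := by
    apply inv_strictAnti₀ (by positivity) h1
  have hconv : ConvexOn ℝ (Set.Ioi (0:ℝ)) (fun t : ℝ => t⁻¹) := by
    have := (strictConvexOn_zpow (m := -1) (by decide) (by decide)).convexOn
    simpa using this
  have h3 : ((1/2 : ℝ) * Real.sqrt x + (1/2 : ℝ) * Real.sqrt y)⁻¹ ≤
      (1/2 : ℝ) * (Real.sqrt x)⁻¹ + (1/2 : ℝ) * (Real.sqrt y)⁻¹ :=
    hconv.2 (Set.mem_Ioi.2 hsx) (Set.mem_Ioi.2 hsy) hp.le hp.le hpq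
  exact h2.trans_le h3

/-- For `N ≥ 1`, `a i > 0` and `g(x) = (∑ i, a i / √(x i))²`, the set of
minimizers of `g` over any convex subset `S` of the open positive orthant has at most
one element. -/
theorem stmt_3 (N : ℕ) (hN : 1 ≤ N) (a : Fin N → ℝ) (ha : ∀ i, 0 < a i)
    (S : Set (Fin N → ℝ)) (hS : Convex ℝ S)
    (hSsub : S ⊆ {x : Fin N → ℝ | ∀ i, 0 < x i}) :
    Set.Subsingleton
      {x ∈ S | ∀ y ∈ S,
        (∑ i, a i / Real.sqrt (x i)) ^ 2 ≤ (∑ i, a i / Real.sqrt (y i)) ^ 2} := by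
  set f : (Fin N → ℝ) → ℝ := fun x => ∑ i, a i / Real.sqrt (x i) with hf
  have hfpos : ∀ x ∈ S, 0 < f x := by
    intro x hx
    apply Finset.sum_pos
    · intro i _
      exact div_pos (ha i) (Real.sqrt_pos.2 (hSsub hx i))
    · haveI : Nonempty (Fin N) := ⟨⟨0, hN⟩⟩
      exact Finset.univ_nonempty
  rintro x ⟨hxS, hxmin⟩ y ⟨hyS, hymin⟩
  by_contra hxy
  -- f x = f y
  have hfx := hfpos x hxS
  have hfy := hfpos y hyS
  have hxy2 : f x = f y := by
    have h1 : f x ^ 2 ≤ f y ^ 2 := hxmin y hyS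
    have h2 : f y ^ 2 ≤ f x ^ 2 := hymin x hxS
    have := le_antisymm h1 h2
    nlinarith
  set z : Fin N → ℝ := fun i => (1/2 : ℝ) * x i + (1/2 : ℝ) * y i with hz
  have hzS : z ∈ S := hS hxS hyS (by norm_num) (by norm_num) (by norm_num)
  -- strict inequality at some coordinate
  obtain ⟨i₀, hi₀⟩ : ∃ i, x i ≠ y i := by
    by_contra h
    push_neg at h
    exact hxy (funext h)
  have hterm : ∀ i, a i / Real.sqrt (z i) ≤
      (1/2 : ℝ) * (a i / Real.sqrt (x i)) + (1/2 : ℝ) * (a i / Real.sqrt (y i)) := by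
    intro i
    by_cases h : x i = y i
    · have : z i = x i := by simp [hz, h]; ring
      rw [this, h]; ring_nf; rw [← h]
    · have := inv_sqrt_strict (x i) (y i) (hSsub hxS i) (hSsub hyS i) h
      have := mul_le_mul_of_nonneg_left this.le (ha i).le
      rw [div_eq_mul_inv, div_eq_mul_inv, div_eq_mul_inv]
      calc a i * (Real.sqrt (z i))⁻¹
          ≤ a i * ((1/2 : ℝ) * (Real.sqrt (x i))⁻¹ + (1/2 : ℝ) * (Real.sqrt (y i))⁻¹) := this
        _ = (1/2 : ℝ) * (a i * (Real.sqrt (x i))⁻¹) + (1/2 : ℝ) * (a i * (Real.sqrt (y i))⁻¹) := by ring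
  have hstrict : a i₀ / Real.sqrt (z i₀) <
      (1/2 : ℝ) * (a i₀ / Real.sqrt (x i₀)) + (1/2 : ℝ) * (a i₀ / Real.sqrt (y i₀)) := by
    have := inv_sqrt_strict (x i₀) (y i₀) (hSsub hxS i₀) (hSsub hyS i₀) hi₀
    have h2 := mul_lt_mul_of_pos_left this (ha i₀)
    rw [div_eq_mul_inv, div_eq_mul_inv, div_eq_mul_inv]
    calc a i₀ * (Real.sqrt (z i₀))⁻¹
        < a i₀ * ((1/2 : ℝ) * (Real.sqrt (x i₀))⁻¹ + (1/2 : ℝ) * (Real.sqrt (y i₀))⁻¹) := h2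
      _ = (1/2 : ℝ) * (a i₀ * (Real.sqrt (x i₀))⁻¹) + (1/2 : ℝ) * (a i₀ * (Real.sqrt (y i₀))⁻¹) := by ring
  have hfz : f z < (1/2 : ℝ) * f x + (1/2 : ℝ) * f y := by
    rw [hf]
    calc (∑ i, a i / Real.sqrt (z i))
        < ∑ i, ((1/2 : ℝ) * (a i / Real.sqrt (x i)) + (1/2 : ℝ) * (a i / Real.sqrt (y i))) :=
          Finset.sum_lt_sum (fun i _ => hterm i) ⟨i₀, Finset.mem_univ i₀, hstrict⟩
      _ = (1/2 : ℝ) * (∑ i, a i / Real.sqrt (x i)) + (1/2 : ℝ) * (∑ i, a i / Real.sqrt (y i)) := by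
          rw [Finset.sum_add_distrib, ← Finset.mul_sum, ← Finset.mul_sum]
  have hfzlt : f z < f x := by rw [hxy2] at hfz ⊢; linarith
  have hfz0 : 0 ≤ f z := (hfpos z hzS).le
  have : f z ^ 2 < f x ^ 2 := by nlinarith
  exact absurd (hxmin z hzS) (not_le.2 this)
end

section
/- Let N, n ≥ 1. For i ∈ Fin (N+1), j ∈ Fin n let v i j ∈ ℝ, for i ∈ Fin N, j ∈ Fin n let w i j ∈ ℝ, let x : Fin (N+1) → ℝ satisfy x i ≥ 0, let Δs : Fin N → ℝ satisfy Δs i > 0, and for each j ∈ Fin n let q̄ j > 0 and q̲ j < 0. Let ζv⁺, ζv⁻ : Fin (N+1) → Fin n → ℝ and ζa⁺, ζa⁻ : Fin N → Fin n → ℝ be nonnegative. For i ∈ Fin N, j ∈ Fin n define A i j = (w i j − v' i j/(2·Δs i))·x i + (v' i j/(2·Δs i))·x (i+1), where v' i j denotes v evaluated at the embedding of i into Fin (N+1). Assume for all i ∈ Fin N, j ∈ Fin n: (a) ζa⁺ i j · ζa⁻ i j = 0, (b) if ζa⁺ i j > 0 then A i j = q̄ j, and (c) if ζa⁻ i j >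 0 then A i j = q̲ j. Then 2·∑_{i ∈ Fin (N+1)} ∑_{j ∈ Fin n} (ζv⁺ i j + ζv⁻ i j)·x i·(v i j)² + ∑_{i ∈ Fin N} ∑_{j ∈ Fin n} (ζa⁺ i j − ζa⁻ i j)·A i j ≥ 0. -/
open Finset

/-- Core inequality of Theorem 1, `⟨∂L_I/∂θ, θ⟩ ≥ 0`, under the
complementary slackness conditions for the acceleration multipliers. -/
theorem stmt_6 (N n : ℕ) (hN : 1 ≤ N) (hn : 1 ≤ n)
    (v : Fin (N + 1) → Fin n → ℝ) (w : Fin N → Fin n → ℝ)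
    (x : Fin (N + 1) → ℝ) (hx : ∀ i, 0 ≤ x i)
    (Δs : Fin N → ℝ) (hΔs : ∀ i, 0 < Δs i)
    (qbar qlow : Fin n → ℝ) (hqbar : ∀ j, 0 < qbar j) (hqlow : ∀ j, qlow j < 0)
    (ζvp ζvm : Fin (N + 1) → Fin n → ℝ) (ζap ζam : Fin N → Fin n → ℝ)
    (hζvp : ∀ i j, 0 ≤ ζvp i j) (hζvm : ∀ i j, 0 ≤ ζvm i j)
    (hζap : ∀ i j, 0 ≤ ζap i j) (hζam : ∀ i j, 0 ≤ ζam i j)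
    (A : Fin N → Fin n → ℝ)
    (hA : ∀ i j, A i j =
      (w i j - v i.castSucc j / (2 * Δs i)) * x i.castSucc +
        (v i.castSucc j / (2 * Δs i)) * x i.succ)
    (hcs : ∀ i j, ζap i j * ζam i j = 0)
    (hup : ∀ i j, 0 < ζap i j → A i j = qbar j)
    (hlow : ∀ i j, 0 < ζam i j → A i j = qlow j) :
    0 ≤ 2 * ∑ i, ∑ j, (ζvp i j + ζvm i j) * x i * (v i j) ^ 2 +
        ∑ i, ∑ j, (ζap i j - ζam i j) * A i j := by
  have h1 : 0 ≤ ∑ i, ∑ j, (ζvp i j + ζvm i j) * x i * (v i j) ^ 2 := by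
    apply Finset.sum_nonneg; intro i _
    apply Finset.sum_nonneg; intro j _
    have := hζvp i j; have := hζvm i j; have := hx i
    positivity
  have h2 : 0 ≤ ∑ i, ∑ j, (ζap i j - ζam i j) * A i j := by
    apply Finset.sum_nonneg; intro i _
    apply Finset.sum_nonneg; intro j _
    rcases lt_or_eq_of_le (hζap i j) with hp | hp
    · have hm : ζam i j = 0 := by
        have := hcs i j; nlinarith
      rw [hup i j hp, hm]
      have := hqbar j; nlinarith
    · rcases lt_or_eq_of_le (hζam i j) with hm | hm
      · rw [hlow i j hm, ← hp]
        have := hqlow j; nlinarith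
      · rw [← hp, ← hm]; ring_nf; simp
  linarith
end

section
/- Let N, n ≥ 1. For i ∈ Fin (N+1), j ∈ Fin n let v i j, w i j ∈ ℝ, and for each j let q̇̄ j > 0, q̲̇ j < 0, q̈̄ j > 0, q̲̈ j < 0. Define V† = max over all (i,j) of max{ (max{v i j/q̇̄ j, v i j/q̲̇ j})², max{w i j/q̈̄ j, w i j/q̲̈ j} }. Suppose V† > 0, and set ṡ† = 1/√V†. Then (a) ṡ† > 0 and for all i, j: q̲̇ j ≤ v i j · ṡ† ≤ q̇̄ j and q̲̈ j ≤ w i j · (ṡ†)² ≤ q̈̄ j; and (b) for every ṡ ≥ 0 such that for all i, j, q̲̇ j ≤ v i j · ṡ ≤ q̇̄ j and q̲̈ j ≤ w i j · ṡ² ≤ q̈̄ j, one has ṡ ≤ ṡ†. -/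
/-- Under velocity/acceleration limits `q̲̇ j < 0 < q̇̄ j`,
`q̲̈ j < 0 < q̈̄ j`, the point `ṡ† = 1/√V†` (with `V†` the closed-form value of
Theorem 2, assumed positive) is feasible for the constant-path-velocity inner
problem and is the maximal feasible constant path speed. -/
theorem stmt_7 (N n : ℕ) (hN : 1 ≤ N) (hn : 1 ≤ n)
    (v w : Fin (N + 1) → Fin n → ℝ)
    (qdb qdl qddb qddl : Fin n → ℝ)
    (hqdb : ∀ j, 0 < qdb j) (hqdl : ∀ j, qdl j < 0)
    (hqddb : ∀ j, 0 < qddb j) (hqddl : ∀ j, qddl j < 0)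
    (Vdag : ℝ)
    (hVdag : Vdag = ⨆ i : Fin (N + 1), ⨆ j : Fin n,
      max ((max (v i j / qdb j) (v i j / qdl j)) ^ 2)
          (max (w i j / qddb j) (w i j / qddl j)))
    (hpos : 0 < Vdag)
    (sdag : ℝ) (hsdag : sdag = 1 / Real.sqrt Vdag) :
    (0 < sdag ∧ ∀ i j,
        qdl j ≤ v i j * sdag ∧ v i j * sdag ≤ qdb j ∧
        qddl j ≤ w i j * sdag ^ 2 ∧ w i j * sdag ^ 2 ≤ qddb j) ∧
    (∀ s : ℝ, 0 ≤ s →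
      (∀ i j, qdl j ≤ v i j * s ∧ v i j * s ≤ qdb j ∧
              qddl j ≤ w i j * s ^ 2 ∧ w i j * s ^ 2 ≤ qddb j) →
      s ≤ sdag) := by
  have hnen : Nonempty (Fin n) := Fin.pos_iff_nonempty.mp hn
  set rV := Real.sqrt Vdag with hrVdef
  have hrV : 0 < rV := Real.sqrt_pos.mpr hpos
  have hsd : 0 < sdag := by rw [hsdag]; positivity
  have hs1 : sdag * rV = 1 := by rw [hsdag]; exact one_div_mul_cancel hrV.ne'
  have hrV2 : rV ^ 2 = Vdag := Real.sq_sqrt hpos.le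
  have hs2 : sdag ^ 2 * Vdag = 1 := by
    rw [hsdag, div_pow, one_pow, hrV2, one_div, inv_mul_cancel₀ hpos.ne']
  -- each term is ≤ Vdag
  have hle : ∀ i j,
      max ((max (v i j / qdb j) (v i j / qdl j)) ^ 2)
          (max (w i j / qddb j) (w i j / qddl j)) ≤ Vdag := by
    intro i j
    rw [hVdag]
    have hbd1 : BddAbove (Set.range fun j : Fin n =>
        max ((max (v i j / qdb j) (v i j / qdl j)) ^ 2)
            (max (w i j / qddb j) (w i j / qddl j))) :=
      Set.Finite.bddAbove (Set.finite_range _)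
    have hbd2 : BddAbove (Set.range fun i : Fin (N + 1) =>
        ⨆ j : Fin n, max ((max (v i j / qdb j) (v i j / qdl j)) ^ 2)
            (max (w i j / qddb j) (w i j / qddl j))) :=
      Set.Finite.bddAbove (Set.finite_range _)
    exact le_trans (le_ciSup hbd1 j) (le_ciSup hbd2 i)
  refine ⟨⟨hsd, ?_⟩, ?_⟩
  · intro i j
    have hM := hle i j
    have h1 : (max (v i j / qdb j) (v i j / qdl j)) ^ 2 ≤ Vdag :=
      le_trans (le_max_left _ _) hM
    have h2 : max (w i j / qddb j) (w i j / qddl j) ≤ Vdag :=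
      le_trans (le_max_right _ _) hM
    have habs : |max (v i j / qdb j) (v i j / qdl j)| ≤ rV := by
      rw [← Real.sqrt_sq_eq_abs]
      exact Real.sqrt_le_sqrt h1
    have hmx : max (v i j / qdb j) (v i j / qdl j) ≤ rV :=
      le_trans (le_abs_self _) habs
    have hva : v i j / qdb j ≤ rV := le_trans (le_max_left _ _) hmx
    have hvb : v i j / qdl j ≤ rV := le_trans (le_max_right _ _) hmx
    have hwa : w i j / qddb j ≤ Vdag := le_trans (le_max_left _ _) h2
    have hwb : w i j / qddl j ≤ Vdag := le_trans (le_max_right _ _) h2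
    have hva' : v i j ≤ rV * qdb j := (div_le_iff₀ (hqdb j)).mp hva
    have hvb' : rV * qdl j ≤ v i j := (div_le_iff_of_neg (hqdl j)).mp hvb
    have hwa' : w i j ≤ Vdag * qddb j := (div_le_iff₀ (hqddb j)).mp hwa
    have hwb' : Vdag * qddl j ≤ w i j := (div_le_iff_of_neg (hqddl j)).mp hwb
    have key1 : ∀ c : ℝ, rV * c * sdag = c := fun c => by
      have h : rV * c * sdag = c * (sdag * rV) := by ring
      rw [h, hs1, mul_one]
    have key2 : ∀ c : ℝ, Vdag * c * sdag ^ 2 = c := fun c => by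
      have h : Vdag * c * sdag ^ 2 = c * (sdag ^ 2 * Vdag) := by ring
      rw [h, hs2, mul_one]
    refine ⟨?_, ?_, ?_, ?_⟩
    · have := mul_le_mul_of_nonneg_right hvb' hsd.le
      rw [key1] at this; linarith
    · have := mul_le_mul_of_nonneg_right hva' hsd.le
      rw [key1] at this; linarith
    · have := mul_le_mul_of_nonneg_right hwb' (sq_nonneg sdag)
      rw [key2] at this; linarith
    · have := mul_le_mul_of_nonneg_right hwa' (sq_nonneg sdag)
      rw [key2] at this; linarith
  · intro s hs0 hfeas
    rcases eq_or_lt_of_le hs0 with h | hs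
    · linarith
    have hbound : Vdag ≤ 1 / s ^ 2 := by
      rw [hVdag]
      refine ciSup_le fun i => ciSup_le fun j => ?_
      obtain ⟨h1, h2, h3, h4⟩ := hfeas i j
      have hva : v i j / qdb j ≤ 1 / s :=
        (div_le_div_iff₀ (hqdb j) hs).mpr (by linarith)
      have hvb : v i j / qdl j ≤ 1 / s := by
        rw [← neg_div_neg_eq]
        exact (div_le_div_iff₀ (by linarith [hqdl j]) hs).mpr (by linarith)
      have hwa : w i j / qddb j ≤ 1 / s ^ 2 :=
        (div_le_div_iff₀ (hqddb j) (pow_pos hs 2)).mpr (by linarith)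
      have hwb : w i j / qddl j ≤ 1 / s ^ 2 := by
        rw [← neg_div_neg_eq]
        exact (div_le_div_iff₀ (by linarith [hqddl j]) (pow_pos hs 2)).mpr
          (by linarith)
      have hnn : 0 ≤ max (v i j / qdb j) (v i j / qdl j) := by
        rcases le_or_gt 0 (v i j) with hv | hv
        · exact le_trans (div_nonneg hv (hqdb j).le) (le_max_left _ _)
        · exact le_trans (div_nonneg_of_nonpos hv.le (hqdl j).le)
            (le_max_right _ _)
      have hmx : max (v i j / qdb j) (v i j / qdl j) ≤ 1 / s :=
        max_le hva hvb
      have hsq : (max (v i j / qdb j) (v i j / qdl j)) ^ 2 ≤ 1 / s ^ 2 := by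
        calc (max (v i j / qdb j) (v i j / qdl j)) ^ 2 ≤ (1 / s) ^ 2 :=
              pow_le_pow_left₀ hnn hmx 2
          _ = 1 / s ^ 2 := by rw [div_pow, one_pow]
      exact max_le hsq (max_le hwa hwb)
    have hVs : Vdag * s ^ 2 ≤ 1 := by
      have := (le_div_iff₀ (pow_pos hs 2)).mp hbound
      linarith
    have hsq : s ^ 2 ≤ sdag ^ 2 := by nlinarith [hVs, hs2, hpos]
    have h' := Real.sqrt_le_sqrt hsq
    rwa [Real.sqrt_sq hs.le, Real.sqrt_sq hsd.le] at h'
end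

section
/- Let N, n ≥ 1. For i ∈ Fin (N+1), j ∈ Fin n let v i j, w i j ∈ ℝ, and for each j let q̇̄ j > 0, q̲̇ j < 0, q̈̄ j > 0, q̲̈ j < 0. Define V† = max over all (i,j) of max{ (max{v i j/q̇̄ j, v i j/q̲̇ j})², max{w i j/q̈̄ j, w i j/q̲̈ j} }. Then the infimum of 1/ṡ² over the set { ṡ ∈ ℝ | ṡ > 0 and for all i, j: q̲̇ j ≤ v i j·ṡ ≤ q̇̄ j and q̲̈ j ≤ w i j·ṡ² ≤ q̈̄ j } equals V†. -/
lemma base_iff (t x qb ql : ℝ) (ht : 0 < t) (hqb : 0 < qb) (hql : ql < 0) :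
    (ql ≤ x * t ∧ x * t ≤ qb) ↔ max (x / qb) (x / ql) ≤ 1 / t := by
  rw [max_le_iff]
  have h1 : x / qb ≤ 1 / t ↔ x * t ≤ qb := by
    rw [div_le_div_iff₀ hqb ht, one_mul]
  have h2 : x / ql ≤ 1 / t ↔ ql ≤ x * t := by
    rw [div_le_iff_of_neg hql, one_div_mul_eq_div, div_le_iff₀ ht]
  rw [h1, h2]; tauto

lemma max_nonneg_div (x qb ql : ℝ) (hqb : 0 < qb) (hql : ql < 0) :
    0 ≤ max (x / qb) (x / ql) := by
  rcases le_or_gt 0 x with h | h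
  · exact le_max_of_le_left (div_nonneg h hqb.le)
  · exact le_max_of_le_right (div_nonneg_iff.2 (Or.inr ⟨h.le, hql.le⟩))

/-- Value identity of Theorem 2: the infimum of `1/ṡ²` over the set of
feasible positive constant path speeds equals the closed-form maximum `V†`. -/
theorem stmt_8 (N n : ℕ) (hN : 1 ≤ N) (hn : 1 ≤ n)
    (v w : Fin (N + 1) → Fin n → ℝ)
    (qdb qdl qddb qddl : Fin n → ℝ)
    (hqdb : ∀ j, 0 < qdb j) (hqdl : ∀ j, qdl j < 0)
    (hqddb : ∀ j, 0 < qddb j) (hqddl : ∀ j, qddl j < 0) :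
    sInf ((fun s : ℝ => 1 / s ^ 2) ''
        {s : ℝ | 0 < s ∧ ∀ i j,
          qdl j ≤ v i j * s ∧ v i j * s ≤ qdb j ∧
          qddl j ≤ w i j * s ^ 2 ∧ w i j * s ^ 2 ≤ qddb j}) =
      ⨆ i : Fin (N + 1), ⨆ j : Fin n,
        max ((max (v i j / qdb j) (v i j / qdl j)) ^ 2)
            (max (w i j / qddb j) (w i j / qddl j)) := by
  haveI : Nonempty (Fin n) := ⟨⟨0, hn⟩⟩
  set f : Fin (N + 1) → Fin n → ℝ := fun i j =>
    max ((max (v i j / qdb j) (v i j / qdl j)) ^ 2)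
        (max (w i j / qddb j) (w i j / qddl j)) with hf
  set C : ℝ := ⨆ i, ⨆ j, f i j with hC
  -- nonnegativity of each term
  have hfnn : ∀ i j, 0 ≤ f i j := fun i j =>
    le_max_of_le_left (sq_nonneg _)
  have hbdd : ∀ i : Fin (N + 1), BddAbove (Set.range fun j => f i j) :=
    fun i => Set.Finite.bddAbove (Set.finite_range _)
  have hbdd2 : BddAbove (Set.range fun i => ⨆ j, f i j) :=
    Set.Finite.bddAbove (Set.finite_range _)
  have hC0 : 0 ≤ C := le_trans (hfnn 0 ⟨0, hn⟩) <|
    le_trans (le_ciSup (hbdd 0) _) (le_ciSup hbdd2 0)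
  -- C ≤ a ↔ all terms ≤ a
  have hCle : ∀ a : ℝ, C ≤ a ↔ ∀ i j, f i j ≤ a := by
    intro a
    rw [hC, ciSup_le_iff hbdd2]
    exact forall_congr' fun i => ciSup_le_iff (hbdd i)
  -- per-term iff
  have hterm : ∀ (s : ℝ), 0 < s → ∀ i j,
      (qdl j ≤ v i j * s ∧ v i j * s ≤ qdb j ∧
        qddl j ≤ w i j * s ^ 2 ∧ w i j * s ^ 2 ≤ qddb j) ↔ f i j ≤ 1 / s ^ 2 := by
    intro s hs i j
    have hs2 : 0 < s ^ 2 := by positivity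
    have hvel := base_iff s (v i j) (qdb j) (qdl j) hs (hqdb j) (hqdl j)
    have hacc := base_iff (s ^ 2) (w i j) (qddb j) (qddl j) hs2 (hqddb j) (hqddl j)
    have hveq : max (v i j / qdb j) (v i j / qdl j) ≤ 1 / s ↔
        (max (v i j / qdb j) (v i j / qdl j)) ^ 2 ≤ 1 / s ^ 2 := by
      rw [show (1:ℝ) / s ^ 2 = (1 / s) ^ 2 by rw [div_pow, one_pow]]
      exact (pow_le_pow_iff_left₀ (max_nonneg_div _ _ _ (hqdb j) (hqdl j))
        (by positivity) two_ne_zero).symm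
    rw [hf]
    constructor
    · rintro ⟨h1, h2, h3, h4⟩
      exact max_le (hveq.1 (hvel.1 ⟨h1, h2⟩)) (hacc.1 ⟨h3, h4⟩)
    · intro h
      obtain ⟨a1, a2⟩ := hvel.2 (hveq.2 (le_trans (le_max_left _ _) h))
      obtain ⟨a3, a4⟩ := hacc.2 (le_trans (le_max_right _ _) h)
      exact ⟨a1, a2, a3, a4⟩
  -- image description
  have himg : (fun s : ℝ => 1 / s ^ 2) ''
      {s : ℝ | 0 < s ∧ ∀ i j,
          qdl j ≤ v i j * s ∧ v i j * s ≤ qdb j ∧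
          qddl j ≤ w i j * s ^ 2 ∧ w i j * s ^ 2 ≤ qddb j} =
      {t : ℝ | 0 < t ∧ C ≤ t} := by
    ext t
    constructor
    · rintro ⟨s, ⟨hs, hfeas⟩, rfl⟩
      refine ⟨by positivity, ?_⟩
      rw [hCle]
      exact fun i j => (hterm s hs i j).1 (hfeas i j)
    · rintro ⟨ht, hCt⟩
      refine ⟨(Real.sqrt t)⁻¹, ⟨by positivity, ?_⟩, ?_⟩
      · intro i j
        rw [hterm _ (by positivity) i j]
        have : (1 : ℝ) / ((Real.sqrt t)⁻¹) ^ 2 = t := by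
          rw [one_div, inv_pow, inv_inv, Real.sq_sqrt ht.le]
        rw [this]
        exact le_trans (le_trans (le_ciSup (hbdd i) j) (le_ciSup hbdd2 i)) hCt
      · show 1 / ((Real.sqrt t)⁻¹) ^ 2 = t
        rw [one_div, inv_pow, inv_inv, Real.sq_sqrt ht.le]
  rw [himg]
  rcases eq_or_lt_of_le hC0 with h0 | h0
  · have : {t : ℝ | 0 < t ∧ C ≤ t} = Set.Ioi 0 := by
      ext t; simp only [Set.mem_setOf_eq, Set.mem_Ioi, ← h0]
      exact ⟨fun h => h.1, fun h => ⟨h, h.le⟩⟩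
    rw [this, csInf_Ioi, ← h0]
  · have : {t : ℝ | 0 < t ∧ C ≤ t} = Set.Ici C := by
      ext t; simp only [Set.mem_setOf_eq, Set.mem_Ici]
      exact ⟨fun h => h.2, fun h => ⟨lt_of_lt_of_le h0 h, h⟩⟩
    rw [this, csInf_Ici]
end

section
/- Let N, n ≥ 1, let Δs : Fin N → ℝ satisfy Δs i > 0 for all i, let v : Fin N → Fin n → ℝ, and for each j let q̇̄ j > 0 and q̲̇ j < 0. Then the infimum of (∑_{i ∈ Fin N} Δs i / ṡ i)² over the set { ṡ : Fin N → ℝ | ∀ i, ṡ i > 0, and ∀ i j, q̲̇ j ≤ v i j · ṡ i ≤ q̇̄ j } equals (∑_{i ∈ Fin N} max_{j ∈ Fin n} max{ Δs i · v i j / q̇̄ j, Δs i · v i j / q̲̇ j })². -/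
lemma aux_up (Δ s q w : ℝ) (hΔ : 0 < Δ) (hs : 0 < s) (hq : 0 < q)
    (h : w * s ≤ q) : Δ * w / q ≤ Δ / s := by
  rw [div_le_div_iff₀ hq hs]; nlinarith

lemma aux_lo (Δ s q w : ℝ) (hΔ : 0 < Δ) (hs : 0 < s) (hq : q < 0)
    (h : q ≤ w * s) : Δ * w / q ≤ Δ / s := by
  have h2 : Δ * (-w) / (-q) ≤ Δ / s :=
    aux_up Δ s (-q) (-w) hΔ hs (by linarith) (by nlinarith)
  have h3 : Δ * (-w) / (-q) = Δ * w / q := by ring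
  linarith [h3 ▸ h2]

lemma aux_up' (Δ t q w : ℝ) (ht : 0 < t) (hq : 0 < q)
    (h : Δ * w / q ≤ t) : w * (Δ / t) ≤ q := by
  rw [div_le_iff₀ hq] at h
  have h1 : w * (Δ / t) = w * Δ / t := by ring
  rw [h1, div_le_iff₀ ht]
  nlinarith

lemma aux_lo' (Δ t q w : ℝ) (ht : 0 < t) (hq : q < 0)
    (h : Δ * w / q ≤ t) : q ≤ w * (Δ / t) := by
  rw [div_le_iff_of_neg hq] at h
  have h1 : w * (Δ / t) = w * Δ / t := by ring
  rw [h1, le_div_iff₀ ht]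
  nlinarith

lemma csInf_sq_eq (T : Set ℝ) (C : ℝ) (hC : 0 ≤ C)
    (hlb : ∀ x ∈ T, C ≤ x)
    (hap : ∀ δ : ℝ, 0 < δ → ∃ x ∈ T, x ≤ C + δ) :
    sInf ((fun t => t ^ 2) '' T) = C ^ 2 := by
  obtain ⟨x₀, hx₀, _⟩ := hap 1 one_pos
  have hTne : T.Nonempty := ⟨x₀, hx₀⟩
  apply le_antisymm
  · apply le_of_forall_pos_le_add
    intro ε hε
    set δ := min 1 (ε / (2 * C + 1)) with hδdef
    have hδ0 : 0 < δ := lt_min one_pos (by positivity)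
    obtain ⟨x, hx, hxle⟩ := hap δ hδ0
    have hbdd : BddBelow ((fun t => t ^ 2) '' T) := by
      refine ⟨0, ?_⟩
      rintro y ⟨t, ht, rfl⟩
      positivity
    have h1 : sInf ((fun t => t ^ 2) '' T) ≤ x ^ 2 := csInf_le hbdd ⟨x, hx, rfl⟩
    have hxC : C ≤ x := hlb x hx
    have hδ1 : δ ≤ 1 := min_le_left _ _
    have hδ2 : δ * (2 * C + 1) ≤ ε := by
      have := min_le_right 1 (ε / (2 * C + 1))
      calc δ * (2 * C + 1) ≤ (ε / (2 * C + 1)) * (2 * C + 1) := by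
            apply mul_le_mul_of_nonneg_right this (by positivity)
        _ = ε := by field_simp
    have h2 : x ^ 2 ≤ (C + δ) ^ 2 := by nlinarith
    have h3 : (C + δ) ^ 2 ≤ C ^ 2 + ε := by nlinarith
    linarith
  · apply le_csInf (hTne.image _)
    rintro y ⟨t, ht, rfl⟩
    have := hlb t ht
    simp only []
    nlinarith

/-- Value identity of Theorem 3 (no-acceleration-constraints case):
the infimum of the squared traversal time `(∑ i, Δs i / ṡ i)²` over feasible
positive path speeds equals the closed-form value. -/
theorem stmt_12 (N n : ℕ) (hN : 1 ≤ N) (hn : 1 ≤ n)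
    (Δs : Fin N → ℝ) (hΔs : ∀ i, 0 < Δs i)
    (v : Fin N → Fin n → ℝ)
    (qdb qdl : Fin n → ℝ) (hqdb : ∀ j, 0 < qdb j) (hqdl : ∀ j, qdl j < 0) :
    sInf ((fun s : Fin N → ℝ => (∑ i, Δs i / s i) ^ 2) ''
        {s : Fin N → ℝ | (∀ i, 0 < s i) ∧
          ∀ i j, qdl j ≤ v i j * s i ∧ v i j * s i ≤ qdb j}) =
      (∑ i, ⨆ j : Fin n,
        max (Δs i * v i j / qdb j) (Δs i * v i j / qdl j)) ^ 2 := by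
  haveI : Nonempty (Fin n) := ⟨⟨0, hn⟩⟩
  set c : Fin N → ℝ :=
    fun i => ⨆ j : Fin n, max (Δs i * v i j / qdb j) (Δs i * v i j / qdl j) with hcdef
  have hmax_le_c : ∀ i j,
      max (Δs i * v i j / qdb j) (Δs i * v i j / qdl j) ≤ c i := by
    intro i j
    exact le_ciSup (f := fun j : Fin n =>
      max (Δs i * v i j / qdb j) (Δs i * v i j / qdl j))
      (Set.Finite.bddAbove (Set.finite_range _)) j
  have hc0 : ∀ i, 0 ≤ c i := by
    intro i
    set j0 : Fin n := ⟨0, hn⟩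
    refine le_trans ?_ (hmax_le_c i j0)
    rcases le_or_gt 0 (v i j0) with h | h
    · exact le_max_of_le_left (div_nonneg (mul_nonneg (hΔs i).le h) (hqdb j0).le)
    · refine le_max_of_le_right ?_
      have h1 : Δs i * v i j0 ≤ 0 := by nlinarith [hΔs i]
      rw [div_nonneg_iff]
      exact Or.inr ⟨h1, (hqdl j0).le⟩
  have hC0 : 0 ≤ ∑ i, c i := Finset.sum_nonneg fun i _ => hc0 i
  have hrw : (fun s : Fin N → ℝ => (∑ i, Δs i / s i) ^ 2) ''
        {s : Fin N → ℝ | (∀ i, 0 < s i) ∧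
          ∀ i j, qdl j ≤ v i j * s i ∧ v i j * s i ≤ qdb j}
      = (fun t => t ^ 2) '' ((fun s : Fin N → ℝ => ∑ i, Δs i / s i) ''
        {s : Fin N → ℝ | (∀ i, 0 < s i) ∧
          ∀ i j, qdl j ≤ v i j * s i ∧ v i j * s i ≤ qdb j}) := by
    rw [Set.image_image]
  rw [hrw]
  apply csInf_sq_eq _ _ hC0
  · rintro x ⟨s, ⟨hs, hcon⟩, rfl⟩
    apply Finset.sum_le_sum
    intro i _
    apply ciSup_le
    intro j
    apply max_le
    · exact aux_up _ _ _ _ (hΔs i) (hs i) (hqdb j) (hcon i j).2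
    · exact aux_lo _ _ _ _ (hΔs i) (hs i) (hqdl j) (hcon i j).1
  · intro δ hδ
    have hNpos : (0 : ℝ) < N := by
      exact_mod_cast Nat.pos_of_ne_zero (by omega)
    set ε := δ / N with hεdef
    have hε : 0 < ε := by positivity
    have hpos : ∀ i, 0 < c i + ε := fun i => by linarith [hc0 i]
    refine ⟨∑ i, (c i + ε), ⟨fun i => Δs i / (c i + ε), ⟨?_, ?_⟩, ?_⟩, ?_⟩
    · intro i
      exact div_pos (hΔs i) (hpos i)
    · intro i j
      constructor
      · exact aux_lo' _ _ _ _ (hpos i) (hqdl j)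
          (le_trans (le_trans (le_max_right _ _) (hmax_le_c i j)) (by linarith))
      · exact aux_up' _ _ _ _ (hpos i) (hqdb j)
          (le_trans (le_trans (le_max_left _ _) (hmax_le_c i j)) (by linarith))
    · apply Finset.sum_congr rfl
      intro i _
      field_simp
      exact mul_div_cancel_left₀ _ (ne_of_gt (hΔs i))
    · rw [Finset.sum_add_distrib, Finset.sum_const, Finset.card_univ, Fintype.card_fin]
      have : (N : ℝ) * ε = δ := by
        rw [hεdef]; field_simp
      simp [nsmul_eq_mul, this]
end

section
/- Let N, n, d ≥ 1, let Δs : Fin N → ℝ satisfy Δs i > 0 for all i, for i ∈ Fin N let p' i ∈ ℝ^d, and for each j ∈ Fin n let q̇̄ j > 0 and q̲̇ j < 0. Then the function V : (Fin n → ℝ^d) → ℝ given by V(θ) = (∑_{i ∈ Fin N} max_{j ∈ Fin n} max{ Δs i · ⟨p' i, θ j⟩ / q̇̄ j, Δs i · ⟨p' i, θ j⟩ / q̲̇ j })² is convex on the whole space of parameters θ. -/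
/-!
Each term `Δs i * ⟪p' i, θ j⟫ / c` is linear in `θ`, so the pointwise maximum over the two
velocity limits and over the joints is convex, and so is the sum over path points. Because
`q̇̄ j > 0 > q̲̇ j`, one of the two quotients is always nonnegative, so the sum is a nonnegative
convex function and its square is convex.
-/

open Set Finset

section

variable {𝕜 E β ι : Type*} [Semiring 𝕜] [PartialOrder 𝕜] [AddCommMonoid E] [SMul 𝕜 E]
  [AddCommMonoid β] [PartialOrder β] [IsOrderedAddMonoid β] [Module 𝕜 β]
  {s : Set E}

theorem ConvexOn.finset_sum {f : ι → E → β} (t : Finset ι) (hs : Convex 𝕜 s)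
    (hf : ∀ i ∈ t, ConvexOn 𝕜 s (f i)) : ConvexOn 𝕜 s (fun x => ∑ i ∈ t, f i x) := by
  rw [← Finset.sum_fn]
  exact Finset.sum_induction _ (ConvexOn 𝕜 s) (fun _ _ => ConvexOn.add)
    (convexOn_const (0 : β) hs) hf

end

theorem ConvexOn.iSup_of_finite {E ι : Type*} [AddCommMonoid E] [Module ℝ E] [Finite ι]
    {s : Set E} {f : ι → E → ℝ} (hs : Convex ℝ s) (hf : ∀ i, ConvexOn ℝ s (f i)) :
    ConvexOn ℝ s (fun x => ⨆ i, f i x) := by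
  cases isEmpty_or_nonempty ι
  · simpa only [iSup_of_empty'] using convexOn_const _ hs
  refine ⟨hs, fun x hx y hy a b ha hb hab => ciSup_le fun i => ?_⟩
  have hbdd : ∀ z, BddAbove (range fun i => f i z) := fun z => (Set.finite_range _).bddAbove
  calc f i (a • x + b • y) ≤ a • f i x + b • f i y := (hf i).2 hx hy ha hb hab
    _ ≤ a • (⨆ i, f i x) + b • (⨆ i, f i y) := by
      gcongr
      · exact le_ciSup (hbdd x) i
      · exact le_ciSup (hbdd y) i

theorem zero_le_max_div_div {a b c : ℝ} (hb : 0 < b) (hc : c < 0) : 0 ≤ max (a / b) (a / c) := by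
  rcases le_total 0 a with ha | ha
  · exact le_max_of_le_left (div_nonneg ha hb.le)
  · exact le_max_of_le_right (div_nonneg_of_nonpos ha hc.le)

theorem stmt_13_general (N n d : ℕ)
    (Δs : Fin N → ℝ)
    (p' : Fin N → Fin d → ℝ)
    (qdb qdl : Fin n → ℝ) (hqdb : ∀ j, 0 < qdb j) (hqdl : ∀ j, qdl j < 0) :
    ConvexOn ℝ Set.univ (fun θ : Fin n → Fin d → ℝ =>
      (∑ i, ⨆ j : Fin n,
        max (Δs i * (∑ k, p' i k * θ j k) / qdb j)
            (Δs i * (∑ k, p' i k * θ j k) / qdl j)) ^ 2) := by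
  have hlin : ∀ i j (c : ℝ), ConvexOn ℝ univ (fun θ : Fin n → Fin d → ℝ =>
      Δs i * (∑ k, p' i k * θ j k) / c) := fun i j c =>
    (((Δs i / c) • (dotProductBilin ℝ ℝ (p' i)).comp
      (LinearMap.proj (R := ℝ) (φ := fun _ : Fin n => Fin d → ℝ) j)).convexOn convex_univ).congr
      fun θ _ => by
        simp only [LinearMap.smul_apply, LinearMap.comp_apply, LinearMap.proj_apply,
          dotProductBilin_apply_apply, dotProduct, smul_eq_mul]
        ring
  have hsum := ConvexOn.finset_sum univ convex_univ fun i _ =>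
    ConvexOn.iSup_of_finite convex_univ fun j => (hlin i j (qdb j)).sup (hlin i j (qdl j))
  exact hsum.pow (fun θ _ => sum_nonneg fun i _ => Real.iSup_nonneg fun j =>
    zero_le_max_div_div (hqdb j) (hqdl j)) 2

/-- Convexity assertion of Theorem 3: the closed-form value `V(θ)` of
the no-acceleration-constraints inner problem is convex in `θ : Fin n → ℝ^d`. -/
theorem stmt_13 (N n d : ℕ) (hN : 1 ≤ N) (hn : 1 ≤ n) (hd : 1 ≤ d)
    (Δs : Fin N → ℝ) (hΔs : ∀ i, 0 < Δs i)
    (p' : Fin N → Fin d → ℝ)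
    (qdb qdl : Fin n → ℝ) (hqdb : ∀ j, 0 < qdb j) (hqdl : ∀ j, qdl j < 0) :
    ConvexOn ℝ Set.univ (fun θ : Fin n → Fin d → ℝ =>
      (∑ i, ⨆ j : Fin n,
        max (Δs i * (∑ k, p' i k * θ j k) / qdb j)
            (Δs i * (∑ k, p' i k * θ j k) / qdl j)) ^ 2) :=
  stmt_13_general N n d Δs p' qdb qdl hqdb hqdl
end
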